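/- Two-periodicity of real Graßmannians for k = 2: for every n ≥ 1 the identities S^{2n−1}·S^{2n−2} = (S¹·S⁰) · ℂℙⁿ⁻¹ · ℝℙ^{2n−2} and S^{2n}·S^{2n−1} = (S⁰·S¹) · ℝℙ^{2n} · ℂℙⁿ⁻¹ hold in ℤ[X], where Sᵏ := 2∑_{j=0}^{k} Xʲ, ℝℙᵏ := ∑_{j=0}^{k} Xʲ, and ℂℙᵏ := ∑_{j=0}^{k} X^{2j}. In particular G_{2n,2}(ℝ) = ℂℙⁿ⁻¹·ℝℙ^{2n−2} and G_{2n+1,2}(ℝ) = ℝℙ^{2n}·ℂℙⁿ⁻¹. -/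
import Mathlib


open Polynomial Finset

/-- `Sᵏ = 2∑_{j=0}^{k} Xʲ`, the quantity of the `k`-sphere. -/
noncomputable def sph (k : ℕ) : Polynomial ℤ := 2 * ∑ j ∈ Finset.range (k + 1), X ^ j

/-- `ℝℙᵏ = ∑_{j=0}^{k} Xʲ`. -/
noncomputable def rp (k : ℕ) : Polynomial ℤ := ∑ j ∈ Finset.range (k + 1), X ^ j

/-- `ℂℙᵏ = ∑_{j=0}^{k} X^{2j}`. -/
noncomputable def cp (k : ℕ) : Polynomial ℤ := ∑ j ∈ Finset.range (k + 1), X ^ (2 * j)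

lemma key_sum (m : ℕ) :
    ∑ j ∈ Finset.range (2 * m + 1 + 1), (X : Polynomial ℤ) ^ j =
      (1 + X) * ∑ j ∈ Finset.range (m + 1), X ^ (2 * j) := by
  induction m with
  | zero => simp [Finset.sum_range_succ]
  | succ k ih =>
    rw [show 2 * (k + 1) + 1 + 1 = (2 * k + 1 + 1) + 1 + 1 from rfl,
      Finset.sum_range_succ, Finset.sum_range_succ, ih, Finset.sum_range_succ]
    have e1 : 2 * (k + 1) = 2 * k + 2 := by ring
    rw [Finset.sum_range_succ, e1, Finset.sum_range_succ]
    ring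

/-- Two-periodicity of real Graßmannians for `k = 2`: for `n ≥ 1`,
`S^{2n−1}·S^{2n−2} = (S¹·S⁰)·ℂℙⁿ⁻¹·ℝℙ^{2n−2}` and
`S^{2n}·S^{2n−1} = (S⁰·S¹)·ℝℙ^{2n}·ℂℙⁿ⁻¹` in `ℤ[X]`, so that
`G_{2n,2}(ℝ) = ℂℙⁿ⁻¹·ℝℙ^{2n−2}` and `G_{2n+1,2}(ℝ) = ℝℙ^{2n}·ℂℙⁿ⁻¹`. -/
theorem grassmann_two_periodicity (n : ℕ) (hn : 1 ≤ n) :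
    sph (2 * n - 1) * sph (2 * n - 2) =
        (sph 1 * sph 0) * cp (n - 1) * rp (2 * n - 2) ∧
    sph (2 * n) * sph (2 * n - 1) =
        (sph 0 * sph 1) * rp (2 * n) * cp (n - 1) := by
  obtain ⟨m, rfl⟩ : ∃ m, n = m + 1 := ⟨n - 1, (Nat.succ_pred_eq_of_pos hn).symm⟩
  have h1 : 2 * (m + 1) - 1 = 2 * m + 1 := by omega
  have h2 : 2 * (m + 1) - 2 = 2 * m := by omega
  have h3 : m + 1 - 1 = m := rfl
  rw [h1, h2, h3]
  have key := key_sum m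
  have s0 : sph 0 = 2 := by simp [sph]
  have s1 : sph 1 = 2 * (1 + X) := by simp [sph, Finset.sum_range_succ]
  constructor
  · rw [sph, sph, rp, cp, key, s0, s1]
    ring
  · rw [sph, sph, rp, cp, key, s0, s1]
    ring
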